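/- arXiv:0911.5377 — 3 statements merged into one kernel-verified Lean document; each statement's English description precedes it below -/
import Mathlib

section
/- Let 0 < p < 1 and 0 < q < 1. There is no extractor; that is, there is no measurable function f : {0,1}^ℕ → {0,1} such that, when X ~ Bernoulli(p)^ℕ and Y ~ Bernoulli(q)^ℕ are independent, f(X) ~ Bernoulli(1/2) and f(X) is independent of the random sequence max(X,Y). -/
open MeasureTheory ProbabilityTheory

/-- The Bernoulli measure on `Bool` assigning mass `r` to `true`. -/
noncomputable def bernoulliMeasure (r : ℝ) : Measure Bool :=
  ENNReal.ofReal r • Measure.dirac true + ENNReal.ofReal (1 - r) • Measure.dirac false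

/-- `μ` is the product of Bernoulli(`r`) measures over the index set `I`:
it is a probability measure whose finite-dimensional marginals are i.i.d. Bernoulli(`r`). -/
def IsBernoulliProduct {I : Type*} (r : ℝ) (μ : Measure (I → Bool)) : Prop :=
  IsProbabilityMeasure μ ∧
    ∀ (s : Finset I) (b : I → Bool),
      μ {x | ∀ i ∈ s, x i = b i} =
        ∏ i ∈ s, (if b i then ENNReal.ofReal r else ENNReal.ofReal (1 - r))

/-!
The event that `Y` vanishes on a finite set `S` of coordinates has positive probability, and
`max(X,Y)` vanishes on `S` exactly when both `X` and `Y` do. Since `Y` is independent of `X`,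
independence of `f(X)` from `max(X,Y)` therefore makes `{f(X) = 1}` independent of every event
"`X` vanishes on `S`". These events form a π-system generating the product σ-algebra, so
`{f = 1}` is independent of itself and has probability `0` or `1`, never `1/2`.
-/

lemma measure_eq_zero_or_one_of_indepSets_of_generateFrom {Ω : Type*} {mΩ : MeasurableSpace Ω}
    {μ : Measure Ω} [IsProbabilityMeasure μ] {C : Set (Set Ω)} (hgen : mΩ = .generateFrom C)
    (hC : IsPiSystem C) {A : Set Ω} (hA : MeasurableSet A) (hind : IndepSets {A} C μ) :
    μ A = 0 ∨ μ A = 1 := by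
  have : Indep (.generateFrom {A}) mΩ μ :=
    hind.indep (MeasurableSpace.generateFrom_le (by simpa using hA)) le_rfl
      (.singleton A) hC rfl hgen
  exact measure_eq_zero_or_one_of_indepSet_self
    (this.indepSet_of_measurableSet (MeasurableSpace.measurableSet_generateFrom rfl) hA)

section ZeroCylinder

variable {ι : Type*}

def zeroCylinder (S : Finset ι) : Set (ι → Bool) := {x | ∀ i ∈ S, x i = false}

lemma measurableSet_zeroCylinder (S : Finset ι) : MeasurableSet (zeroCylinder S) := by
  simp only [zeroCylinder, Set.ofPred_forall]
  exact S.measurableSet_biInter fun i _ =>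
    measurableSet_eq_fun (measurable_pi_apply i) measurable_const

lemma zeroCylinder_union [DecidableEq ι] (S T : Finset ι) :
    zeroCylinder (S ∪ T) = zeroCylinder S ∩ zeroCylinder T := by
  ext x
  simp only [zeroCylinder, Finset.mem_union, Set.mem_ofPred_eq, Set.mem_inter_iff]
  exact ⟨fun h => ⟨fun i hi => h i (.inl hi), fun i hi => h i (.inr hi)⟩,
    fun h i hi => hi.elim (h.1 i) (h.2 i)⟩

lemma isPiSystem_zeroCylinder : IsPiSystem (Set.range (zeroCylinder (ι := ι))) := by
  classical
  rintro _ ⟨S, rfl⟩ _ ⟨T, rfl⟩ -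
  exact ⟨S ∪ T, zeroCylinder_union S T⟩

lemma generateFrom_zeroCylinder :
    MeasurableSpace.pi = MeasurableSpace.generateFrom (Set.range (zeroCylinder (ι := ι))) := by
  refine le_antisymm ?_ (MeasurableSpace.generateFrom_le <|
    Set.forall_mem_range.2 measurableSet_zeroCylinder)
  refine iSup_le fun i => Measurable.comap_le
    (m₁ := MeasurableSpace.generateFrom (Set.range zeroCylinder)) (measurable_to_bool ?_)
  have : (fun x : ι → Bool => x i) ⁻¹' {true} = (zeroCylinder {i})ᶜ := by
    ext x; simp [zeroCylinder]
  rw [this]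
  exact (MeasurableSpace.measurableSet_generateFrom (Set.mem_range_self ({i} : Finset ι))).compl

lemma preimage_max_zeroCylinder (S : Finset ι) :
    (fun ω : (ι → Bool) × (ι → Bool) => fun i => max (ω.1 i) (ω.2 i)) ⁻¹' zeroCylinder S =
      zeroCylinder S ×ˢ zeroCylinder S := by
  ext ω
  simp [zeroCylinder, forall_and]

lemma IsBernoulliProduct.measure_zeroCylinder {r : ℝ} {μ : Measure (ι → Bool)}
    (hμ : IsBernoulliProduct r μ) (S : Finset ι) :
    μ (zeroCylinder S) = ENNReal.ofReal (1 - r) ^ S.card :=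
  (hμ.2 S fun _ => false).trans (by simp)

lemma IsBernoulliProduct.measure_zeroCylinder_ne_zero {r : ℝ} {μ : Measure (ι → Bool)}
    (hμ : IsBernoulliProduct r μ) (hr : r < 1) (S : Finset ι) : μ (zeroCylinder S) ≠ 0 := by
  rw [hμ.measure_zeroCylinder]
  exact pow_ne_zero _ (ENNReal.ofReal_pos.2 (by linarith)).ne'

lemma indepSets_zeroCylinder_of_indepFun_max {β : Type*} [MeasurableSpace β]
    {μ ν : Measure (ι → Bool)} [SFinite μ] [IsProbabilityMeasure ν]
    (hν : ∀ S, ν (zeroCylinder S) ≠ 0) {f : (ι → Bool) → β} {t : Set β} (ht : MeasurableSet t)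
    (hind : IndepFun (fun ω => f ω.1) (fun ω i => max (ω.1 i) (ω.2 i)) (μ.prod ν)) :
    IndepSets {f ⁻¹' t} (Set.range zeroCylinder) μ := by
  rw [IndepSets_iff]
  rintro _ _ rfl ⟨S, rfl⟩
  have h := hind.measure_inter_preimage_eq_mul t (zeroCylinder S) ht (measurableSet_zeroCylinder S)
  have hfst : (fun ω : (ι → Bool) × (ι → Bool) => f ω.1) ⁻¹' t = (f ⁻¹' t) ×ˢ Set.univ := by
    ext; simp
  rw [hfst, preimage_max_zeroCylinder, Set.prod_inter_prod, Set.univ_inter, Measure.prod_prod,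
    Measure.prod_prod, Measure.prod_prod, measure_univ, mul_one, ← mul_assoc] at h
  exact (ENNReal.mul_left_inj (hν S) (measure_ne_top ν _)).1 h

end ZeroCylinder

theorem no_extractor_general (p q : ℝ) (hq1 : q < 1)
    (μp μq : Measure (ℕ → Bool))
    (hμp : IsBernoulliProduct p μp) (hμq : IsBernoulliProduct q μq) :
    ¬ ∃ f : (ℕ → Bool) → Bool, Measurable f ∧
      (μp.prod μq).map (fun ω => f ω.1) = _root_.bernoulliMeasure (1/2) ∧
      IndepFun (fun ω => f ω.1) (fun ω i => max (ω.1 i) (ω.2 i)) (μp.prod μq) := by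
  rintro ⟨f, hf, hmap, hind⟩
  have := hμp.1
  have := hμq.1
  have hhalf : μp (f ⁻¹' {true}) = ENNReal.ofReal (1 / 2) := by
    change (μp.prod μq).map (f ∘ Prod.fst) = _ at hmap
    rw [← Measure.map_map hf measurable_fst, Measure.map_fst_prod, measure_univ, one_smul] at hmap
    simpa [Measure.map_apply hf, _root_.bernoulliMeasure] using congrArg (· {true}) hmap
  have h01 := measure_eq_zero_or_one_of_indepSets_of_generateFrom generateFrom_zeroCylinder
    isPiSystem_zeroCylinder (hf (measurableSet_singleton true))
    (indepSets_zeroCylinder_of_indepFun_max (hμq.measure_zeroCylinder_ne_zero hq1)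
      (measurableSet_singleton true) hind)
  rw [hhalf] at h01
  norm_num at h01

/-- There is no extractor: no measurable `f : {0,1}^ℕ → {0,1}` such that, for independent
`X ~ Bernoulli(p)^ℕ` and `Y ~ Bernoulli(q)^ℕ`, `f(X) ~ Bernoulli(1/2)` and `f(X)` is
independent of the coordinatewise maximum `max(X,Y)`. -/
theorem no_extractor (p q : ℝ) (hp : 0 < p) (hp1 : p < 1) (hq : 0 < q) (hq1 : q < 1)
    (μp μq : Measure (ℕ → Bool))
    (hμp : IsBernoulliProduct p μp) (hμq : IsBernoulliProduct q μq) :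
    ¬ ∃ f : (ℕ → Bool) → Bool, Measurable f ∧
      (μp.prod μq).map (fun ω => f ω.1) = _root_.bernoulliMeasure (1/2) ∧
      IndepFun (fun ω => f ω.1) (fun ω i => max (ω.1 i) (ω.2 i)) (μp.prod μq) :=
  no_extractor_general p q hq1 μp μq hμp hμq
end

section
/- Let 0 < p < 1, 0 < q < 1 and set p' = p + q − pq. Suppose e : {0,1}^ℕ → {0,1}^ℕ is measurable and satisfies: when X ~ Bernoulli(p)^ℕ and Y ~ Bernoulli(q)^ℕ are independent, e(X) ~ Bernoulli(q)^ℕ and e(X) is independent of max(X,Y). Define F : {0,1}^{ℕ×ℕ} → {0,1}^{ℕ×ℕ} by F(x)(i,j) = max( x(i,j), e( x(i+1,·) )(j) ). Then the pushforward of Bernoulli(p)^{ℕ×ℕ} under F is Bernoulli(p')^{ℕ×ℕ}; in particular, since F(x)(i,j) ≥ x(i,j) always, F is a discrete thickening from density p to density p' on {0,1}^{ℕ×ℕ}. -/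
/-!
Split `x` into its top row `x₀ = x (0, ·)` and the array `x (· + 1, ·)` of the remaining rows;
under the Bernoulli product these are independent and the second has the same law as `x`.
The thickening `F x` has top row `max x₀ (e (x (1, ·)))` and remaining rows `F (x (· + 1, ·))`.
By induction on `m`, the pair `(e x₀, first m rows of F x)` has law
`Bernoulli(q)^ℕ ⊗ Bernoulli(p')^(m × ℕ)`: applied to `x (· + 1, ·)`, the induction hypothesis
makes `e (x (1, ·)) ~ Bernoulli(q)^ℕ` independent of the rows `1, …, m` of `F x`, both being
independent of `x₀`, and the extractor property turns `(x₀, e (x (1, ·)))` into the independent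
pair `(e x₀, max x₀ (e (x (1, ·))))` with laws `Bernoulli(q)^ℕ` and `Bernoulli(p')^ℕ`. Since
finitely many rows determine the measure of every box, `F x` has law `Bernoulli(p')^(ℕ × ℕ)`.
-/

open MeasureTheory ProbabilityTheory

open Measure

theorem MeasurableSpace.comap_precomp_le_iSup_comap_eval {ι L : Type*} {X : ι → Type*}
    [m : ∀ i, MeasurableSpace (X i)] (φ : L → ι) :
    MeasurableSpace.comap (fun x (l : L) => x (φ l)) MeasurableSpace.pi ≤
      ⨆ i ∈ Set.range φ, MeasurableSpace.comap (fun x : (i : ι) → X i => x i) (m i) := by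
  simp only [MeasurableSpace.pi, MeasurableSpace.comap_iSup, MeasurableSpace.comap_comp]
  exact iSup_le fun l => le_iSup₂_of_le (φ l) ⟨l, rfl⟩ le_rfl

namespace MeasureTheory.Measure

section Prod

variable {α β γ : Type*} [MeasurableSpace α] [MeasurableSpace β] [MeasurableSpace γ]
  (μ : Measure α) (ν : Measure β) [SFinite μ] [SFinite ν]

theorem prod_map_left {f : α → γ} (hf : Measurable f) :
    (μ.map f).prod ν = (μ.prod ν).map (Prod.map f id) := by
  rw [← map_prod_map μ ν hf measurable_id, map_id]

theorem prod_map_right {f : β → γ} (hf : Measurable f) :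
    μ.prod (ν.map f) = (μ.prod ν).map (Prod.map id f) := by
  rw [← map_prod_map μ ν measurable_id hf, map_id]

end Prod

section InfinitePi

variable {ι J K : Type*} {X : ι → Type*} [∀ i, MeasurableSpace (X i)]
  (μ : (i : ι) → Measure (X i)) [∀ i, IsProbabilityMeasure (μ i)]

theorem _root_.ProbabilityTheory.indepFun_precomp_infinitePi {f : J → ι} {g : K → ι}
    (h : Disjoint (Set.range f) (Set.range g)) :
    IndepFun (fun x j => x (f j)) (fun x k => x (g k)) (infinitePi μ) := by
  have hcoord := (iIndepFun_infinitePi (P := μ) (X := fun i (ω : X i) => ω)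
    fun i => measurable_id).iIndep
  rw [IndepFun_iff_Indep]
  exact indep_of_indep_of_le_right (indep_of_indep_of_le_left
    (indep_iSup_of_disjoint (fun i => (measurable_pi_apply i).comap_le) hcoord h)
    (MeasurableSpace.comap_precomp_le_iSup_comap_eval f))
    (MeasurableSpace.comap_precomp_le_iSup_comap_eval g)

theorem infinitePi_map_prodMk_precomp {f : J → ι} {g : K → ι}
    (hf : f.Injective) (hg : g.Injective) (h : Disjoint (Set.range f) (Set.range g)) :
    (infinitePi μ).map (fun x => (fun j => x (f j), fun k => x (g k))) =
      (infinitePi fun j => μ (f j)).prod (infinitePi fun k => μ (g k)) := by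
  rw [(ProbabilityTheory.indepFun_precomp_infinitePi μ h).map_prod_eq_prod_map_map
    (measurable_pi_lambda _ fun _ => measurable_pi_apply _).aemeasurable
    (measurable_pi_lambda _ fun _ => measurable_pi_apply _).aemeasurable,
    map_infinitePi_infinitePi_of_inj hf, map_infinitePi_infinitePi_of_inj hg]

end InfinitePi

-- View the two families as one family indexed by `ι × Bool`: its halves `(·, true)` and
-- `(·, false)` give the product, and currying regroups it by `i`.
theorem infinitePi_prod_infinitePi_map_prodMk {ι Y : Type*} [MeasurableSpace Y]
    (μ ν : ι → Measure Y) [∀ i, IsProbabilityMeasure (μ i)] [∀ i, IsProbabilityMeasure (ν i)] :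
    ((infinitePi μ).prod (infinitePi ν)).map (fun ω i => (ω.1 i, ω.2 i)) =
      infinitePi fun i => (μ i).prod (ν i) := by
  let κ : ι → Bool → Measure Y := fun i b => bif b then μ i else ν i
  have : ∀ i b, IsProbabilityMeasure (κ i b) := fun i b => by
    cases b <;> simp only [κ, cond_true, cond_false] <;> infer_instance
  have hsplit : (infinitePi fun ib : ι × Bool => κ ib.1 ib.2).map
      (fun x => (fun i => x (i, true), fun i => x (i, false))) =
        (infinitePi μ).prod (infinitePi ν) :=
    infinitePi_map_prodMk_precomp _ (fun _ _ h => congrArg Prod.fst h)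
      (fun _ _ h => congrArg Prod.fst h)
      (Set.disjoint_left.mpr fun _ ⟨_, h⟩ ⟨_, h'⟩ => by simp [← h] at h')
  have hcurry : ((fun ω : (ι → Y) × (ι → Y) => fun i => (ω.1 i, ω.2 i)) ∘
      fun x : ι × Bool → Y => (fun i => x (i, true), fun i => x (i, false))) =
      (fun y i => (fun u : Bool → Y => (u true, u false)) (y i)) ∘
        MeasurableEquiv.curry ι Bool Y := rfl
  rw [← hsplit, map_map (by fun_prop) (by fun_prop), hcurry,
    ← map_map (by fun_prop) (by fun_prop), infinitePi_map_curry,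
    infinitePi_map_pi (fun i => infinitePi (κ i)) (f := fun _ (u : Bool → Y) => (u true, u false))
      (fun _ => by fun_prop)]
  exact congrArg infinitePi (funext fun i =>
    infinitePi_map_eval_prod (P := κ i) (i := true) (j := false) (by decide))

end MeasureTheory.Measure

-- `_root_` tells the measure on `Bool` above apart from `ProbabilityTheory.bernoulliMeasure`.
theorem bernoulliMeasure_singleton (r : ℝ) (b : Bool) :
    _root_.bernoulliMeasure r {b} = if b then ENNReal.ofReal r else ENNReal.ofReal (1 - r) := by
  cases b <;> simp [_root_.bernoulliMeasure]

theorem isProbabilityMeasure_bernoulliMeasure {r : ℝ} (h0 : 0 ≤ r) (h1 : r ≤ 1) :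
    IsProbabilityMeasure (_root_.bernoulliMeasure r) := by
  constructor
  simp [_root_.bernoulliMeasure, ← ENNReal.ofReal_add h0 (sub_nonneg.mpr h1)]

theorem bernoulliMeasure_prod_map_max {p q : ℝ} (hp0 : 0 ≤ p) (hp1 : p ≤ 1) (hq0 : 0 ≤ q)
    (hq1 : q ≤ 1) :
    ((_root_.bernoulliMeasure p).prod (_root_.bernoulliMeasure q)).map (fun bc => max bc.1 bc.2) =
      _root_.bernoulliMeasure (p + q - p * q) := by
  have hmax : Measurable fun bc : Bool × Bool => max bc.1 bc.2 := measurable_of_countable _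
  have h1p : 0 ≤ 1 - p := sub_nonneg.mpr hp1
  have h1q : 0 ≤ 1 - q := sub_nonneg.mpr hq1
  have htrue : ENNReal.ofReal q * ENNReal.ofReal p + ENNReal.ofReal q * ENNReal.ofReal (1 - p) +
      ENNReal.ofReal (1 - q) * ENNReal.ofReal p = ENNReal.ofReal (p + q - p * q) := by
    rw [← ENNReal.ofReal_mul hq0, ← ENNReal.ofReal_mul hq0, ← ENNReal.ofReal_mul h1q,
      ← ENNReal.ofReal_add (by positivity) (by positivity),
      ← ENNReal.ofReal_add (by positivity) (by positivity)]
    ring_nf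
  have hfalse : ENNReal.ofReal (1 - q) * ENNReal.ofReal (1 - p) =
      ENNReal.ofReal (1 - (p + q - p * q)) := by
    rw [← ENNReal.ofReal_mul h1q]
    ring_nf
  simp only [_root_.bernoulliMeasure, prod_add, add_prod, prod_smul_left, prod_smul_right,
    dirac_prod_dirac, Measure.map_add _ _ hmax, Measure.map_smul, map_dirac' hmax]
  simp only [Bool.max_eq_or, Bool.or_true, Bool.or_false]
  rw [← htrue, ← hfalse]
  simp only [add_smul, smul_add, smul_smul]
  abel

theorem IsBernoulliProduct.map_restrict {I : Type*} {r : ℝ} (h0 : 0 ≤ r) (h1 : r ≤ 1)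
    {μ : Measure (I → Bool)} (hμ : IsBernoulliProduct r μ) (s : Finset I) :
    μ.map s.restrict = Measure.pi fun _ : s => _root_.bernoulliMeasure r := by
  classical
  have := isProbabilityMeasure_bernoulliMeasure h0 h1
  refine ext_of_singleton fun b => ?_
  let b' : I → Bool := fun i => if h : i ∈ s then b ⟨i, h⟩ else false
  have hpre : (s.restrict ⁻¹' {b} : Set (I → Bool)) = {x | ∀ i ∈ s, x i = b' i} := by
    ext x
    simpa [b', funext_iff] using forall₂_congr fun i hi => by rw [dif_pos hi]
  rw [map_apply (Finset.measurable_restrict s) (measurableSet_singleton b), hpre, hμ.2,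
    pi_singleton, ← Finset.prod_coe_sort]
  simp [b', bernoulliMeasure_singleton]

theorem isBernoulliProduct_iff_eq_infinitePi {I : Type*} {r : ℝ} (h0 : 0 ≤ r) (h1 : r ≤ 1)
    {μ : Measure (I → Bool)} :
    IsBernoulliProduct r μ ↔ μ = infinitePi fun _ => _root_.bernoulliMeasure r := by
  have := isProbabilityMeasure_bernoulliMeasure h0 h1
  refine ⟨fun hμ => ((isProjectiveLimit_infinitePi _).unique (hμ.map_restrict h0 h1 ·)).symm, ?_⟩
  rintro rfl
  refine ⟨inferInstance, fun s b => ?_⟩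
  have hpi : {x : I → Bool | ∀ i ∈ s, x i = b i} = Set.pi s fun i => {b i} := by
    ext x
    simp
  rw [hpi, infinitePi_pi _ fun _ _ => measurableSet_singleton _]
  simp [bernoulliMeasure_singleton]

def IsMaxExtractor {I J : Type*} (e : (I → Bool) → J → Bool) (π κ ρ : Measure Bool) : Prop :=
  ((infinitePi fun _ : I => π).prod (infinitePi fun _ : I => κ)).map
      (fun ω => (e ω.1, fun i => max (ω.1 i) (ω.2 i))) =
    (infinitePi fun _ : J => κ).prod (infinitePi fun _ : I => ρ)

theorem isMaxExtractor_of_indepFun {I J : Type*} {e : (I → Bool) → J → Bool} (he : Measurable e)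
    {π κ : Measure Bool} [IsProbabilityMeasure π] [IsProbabilityMeasure κ]
    (hlaw : (infinitePi fun _ => π).map e = infinitePi fun _ => κ)
    (hind : IndepFun (fun ω => e ω.1) (fun ω i => max (ω.1 i) (ω.2 i))
      ((infinitePi fun _ : I => π).prod (infinitePi fun _ => κ))) :
    IsMaxExtractor e π κ ((π.prod κ).map fun bc => max bc.1 bc.2) := by
  have hM : Measurable fun bc : Bool × Bool => max bc.1 bc.2 := measurable_of_countable _
  have hmax : (fun ω : (I → Bool) × (I → Bool) => fun i => max (ω.1 i) (ω.2 i)) =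
      (fun y i => (fun bc : Bool × Bool => max bc.1 bc.2) (y i)) ∘ fun ω i => (ω.1 i, ω.2 i) :=
    rfl
  have hmaxm : Measurable fun ω : (I → Bool) × (I → Bool) => fun i => max (ω.1 i) (ω.2 i) :=
    measurable_pi_lambda _ fun i =>
      hM.comp (f := fun ω : (I → Bool) × (I → Bool) => (ω.1 i, ω.2 i)) (by fun_prop)
  rw [IsMaxExtractor, hind.map_prod_eq_prod_map_map (by fun_prop) hmaxm.aemeasurable,
    show (fun ω : (I → Bool) × (I → Bool) => e ω.1) = e ∘ Prod.fst from rfl,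
    ← map_map he measurable_fst, map_fst_prod, measure_univ, one_smul, hlaw, hmax,
    ← map_map (by fun_prop) (by fun_prop), infinitePi_prod_infinitePi_map_prodMk,
    infinitePi_map_pi _ fun _ => hM]

theorem IsMaxExtractor.map_eq {I J : Type*} {e : (I → Bool) → J → Bool} (he : Measurable e)
    {π κ ρ : Measure Bool} [IsProbabilityMeasure κ] [IsProbabilityMeasure ρ]
    (hstep : IsMaxExtractor e π κ ρ) :
    (infinitePi fun _ => π).map e = infinitePi fun _ => κ := by
  have h := congrArg (map Prod.fst) hstep
  rwa [map_map measurable_fst (by fun_prop), map_fst_prod, measure_univ, one_smul,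
    show Prod.fst ∘ (fun ω : (I → Bool) × (I → Bool) => (e ω.1, fun i => max (ω.1 i) (ω.2 i))) =
      e ∘ Prod.fst from rfl, ← map_map he measurable_fst, map_fst_prod, measure_univ,
    one_smul] at h

section Rows

variable {α : Type*}

def headRow (x : ℕ × ℕ → α) : ℕ → α := fun j => x (0, j)

def tailRows (x : ℕ × ℕ → α) : ℕ × ℕ → α := fun ij => x (ij.1 + 1, ij.2)

def rowCons (r : ℕ → α) (z : ℕ × ℕ → α) : ℕ × ℕ → α
  | (0, j) => r j
  | (i + 1, j) => z (i, j)

def truncRows [Inhabited α] (m : ℕ) (z : ℕ × ℕ → α) : ℕ × ℕ → α :=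
  fun ij => if ij.1 < m then z ij else default

theorem rowCons_headRow_tailRows (x : ℕ × ℕ → α) : rowCons (headRow x) (tailRows x) = x := by
  funext ⟨i, j⟩
  cases i <;> rfl

theorem truncRows_succ_rowCons [Inhabited α] (m : ℕ) (r : ℕ → α) (z : ℕ × ℕ → α) :
    truncRows (m + 1) (rowCons r z) = rowCons r (truncRows m z) := by
  funext ⟨i, j⟩
  cases i <;> simp [truncRows, rowCons]

theorem truncRows_apply_of_lt [Inhabited α] {m : ℕ} (z : ℕ × ℕ → α) {ij : ℕ × ℕ} (h : ij.1 < m) :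
    truncRows m z ij = z ij :=
  if_pos h

variable [MeasurableSpace α]

@[fun_prop]
theorem measurable_headRow : Measurable (headRow : (ℕ × ℕ → α) → ℕ → α) :=
  measurable_pi_lambda _ fun _ => measurable_pi_apply _

@[fun_prop]
theorem measurable_tailRows : Measurable (tailRows : (ℕ × ℕ → α) → ℕ × ℕ → α) :=
  measurable_pi_lambda _ fun _ => measurable_pi_apply _

@[fun_prop]
theorem measurable_rowCons : Measurable fun p : (ℕ → α) × (ℕ × ℕ → α) => rowCons p.1 p.2 :=
  measurable_pi_lambda _ fun
    | (0, j) => (measurable_pi_apply j).comp measurable_fst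
    | (i + 1, j) => (measurable_pi_apply (i, j)).comp measurable_snd

@[fun_prop]
theorem measurable_truncRows [Inhabited α] (m : ℕ) :
    Measurable (truncRows m : (ℕ × ℕ → α) → ℕ × ℕ → α) :=
  measurable_pi_lambda _ fun ij => by
    unfold truncRows
    split_ifs <;> fun_prop

variable (μ : Measure α) [IsProbabilityMeasure μ]

theorem infinitePi_map_headRow_tailRows :
    (infinitePi fun _ : ℕ × ℕ => μ).map (fun x => (headRow x, tailRows x)) =
      (infinitePi fun _ => μ).prod (infinitePi fun _ => μ) :=
  infinitePi_map_prodMk_precomp _ (f := fun j : ℕ => (0, j))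
    (g := fun ij : ℕ × ℕ => (ij.1 + 1, ij.2))
    (fun _ _ h => by simpa using h) (fun _ _ h => by simpa [Prod.ext_iff] using h)
    (Set.disjoint_left.mpr fun _ ⟨_, h⟩ ⟨_, h'⟩ => by simp [← h, Prod.ext_iff] at h')

theorem infinitePi_prod_map_rowCons :
    ((infinitePi fun _ => μ).prod (infinitePi fun _ => μ)).map (fun p => rowCons p.1 p.2) =
      infinitePi fun _ : ℕ × ℕ => μ := by
  rw [← infinitePi_map_headRow_tailRows, map_map (by fun_prop) (by fun_prop)]
  simp [Function.comp_def, rowCons_headRow_tailRows]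

theorem infinitePi_prod_map_truncRows_map_rowCons [Inhabited α] (m : ℕ) :
    ((infinitePi fun _ => μ).prod ((infinitePi fun _ : ℕ × ℕ => μ).map (truncRows m))).map
        (fun p => rowCons p.1 p.2) =
      (infinitePi fun _ : ℕ × ℕ => μ).map (truncRows (m + 1)) := by
  conv_rhs => rw [← infinitePi_prod_map_rowCons, map_map (by fun_prop) (by fun_prop)]
  rw [prod_map_right _ _ (measurable_truncRows m), map_map (by fun_prop) (by fun_prop)]
  congr 1
  funext p
  exact (truncRows_succ_rowCons m p.1 p.2).symm

theorem eq_infinitePi_of_map_truncRows [Inhabited α] (ν : Measure (ℕ × ℕ → α))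
    (h : ∀ m, ν.map (truncRows m) = (infinitePi fun _ : ℕ × ℕ => μ).map (truncRows m)) :
    ν = infinitePi fun _ => μ := by
  refine eq_infinitePi _ fun s t ht => ?_
  have hS : MeasurableSet (Set.pi s t) := .pi s.countable_toSet fun i _ => ht i
  have hpre : truncRows (s.sup Prod.fst + 1) ⁻¹' Set.pi s t = Set.pi s t := by
    ext z
    refine forall₂_congr fun ij hij => ?_
    rw [truncRows_apply_of_lt _ (Nat.lt_succ_of_le (Finset.le_sup (f := Prod.fst) hij))]
  rw [← hpre, ← map_apply (by fun_prop) hS, h, map_apply (by fun_prop) hS, hpre,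
    infinitePi_pi _ fun i _ => ht i]

end Rows

section Thickening

variable (e : (ℕ → Bool) → ℕ → Bool)

def thicken (x : ℕ × ℕ → Bool) : ℕ × ℕ → Bool :=
  fun ij => max (x ij) (e (fun j => x (ij.1 + 1, j)) ij.2)

def thickenStep (ω : (ℕ → Bool) × (ℕ → Bool) × (ℕ × ℕ → Bool)) :
    (ℕ → Bool) × (ℕ × ℕ → Bool) :=
  (e ω.1, rowCons (fun j => max (ω.1 j) (ω.2.1 j)) ω.2.2)

def thickenTrunc (m : ℕ) (x : ℕ × ℕ → Bool) : (ℕ → Bool) × (ℕ × ℕ → Bool) :=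
  (e (headRow x), truncRows m (thicken e x))

theorem thicken_eq_rowCons (x : ℕ × ℕ → Bool) :
    thicken e x = rowCons (fun j => max (headRow x j) (e (headRow (tailRows x)) j))
      (thicken e (tailRows x)) := by
  funext ⟨i, j⟩
  cases i <;> rfl

theorem thickenTrunc_succ (m : ℕ) (x : ℕ × ℕ → Bool) :
    thickenTrunc e (m + 1) x = thickenStep e (headRow x, thickenTrunc e m (tailRows x)) := by
  rw [thickenTrunc, thicken_eq_rowCons, truncRows_succ_rowCons]
  rfl

variable {e}

@[fun_prop]
theorem measurable_thicken (he : Measurable e) : Measurable (thicken e) :=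
  measurable_pi_lambda _ fun ij => by unfold thicken; fun_prop

@[fun_prop]
theorem measurable_thickenStep (he : Measurable e) : Measurable (thickenStep e) := by
  unfold thickenStep
  fun_prop

@[fun_prop]
theorem measurable_thickenTrunc (he : Measurable e) (m : ℕ) : Measurable (thickenTrunc e m) :=
  (he.comp measurable_headRow).prodMk ((measurable_truncRows m).comp (measurable_thicken he))

variable {π κ ρ : Measure Bool} [IsProbabilityMeasure π] [IsProbabilityMeasure κ]
  [IsProbabilityMeasure ρ]

theorem map_thickenStep (he : Measurable e) (hstep : IsMaxExtractor e π κ ρ)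
    (ν : Measure (ℕ × ℕ → Bool)) [SFinite ν] :
    ((infinitePi fun _ => π).prod ((infinitePi fun _ => κ).prod ν)).map (thickenStep e) =
      (infinitePi fun _ => κ).prod
        (((infinitePi fun _ => ρ).prod ν).map fun p => rowCons p.1 p.2) := by
  calc ((infinitePi fun _ => π).prod ((infinitePi fun _ => κ).prod ν)).map (thickenStep e)
      = ((((infinitePi fun _ => π).prod (infinitePi fun _ => κ)).prod ν).map
          MeasurableEquiv.prodAssoc).map (thickenStep e) := by
        rw [prodAssoc_prod]
    _ = ((((infinitePi fun _ => π).prod (infinitePi fun _ => κ)).map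
          (fun ω => (e ω.1, fun j => max (ω.1 j) (ω.2 j)))).prod ν).map
            (fun q => (q.1.1, rowCons q.1.2 q.2)) := by
        rw [prod_map_left _ _ (by fun_prop), map_map (by fun_prop) (by fun_prop),
          map_map (by fun_prop) (by fun_prop)]
        rfl
    _ = ((((infinitePi fun _ => κ).prod (infinitePi fun _ => ρ)).prod ν).map
          MeasurableEquiv.prodAssoc).map (Prod.map id fun p => rowCons p.1 p.2) := by
        rw [hstep, map_map (by fun_prop) (by fun_prop)]
        rfl
    _ = _ := by
        rw [prodAssoc_prod, prod_map_right _ _ (by fun_prop)]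

theorem map_thickenTrunc (he : Measurable e) (hstep : IsMaxExtractor e π κ ρ) (m : ℕ) :
    (infinitePi fun _ : ℕ × ℕ => π).map (thickenTrunc e m) =
      (infinitePi fun _ => κ).prod ((infinitePi fun _ : ℕ × ℕ => ρ).map (truncRows m)) := by
  induction m with
  | zero =>
    have hhead : (infinitePi fun _ : ℕ × ℕ => π).map headRow = infinitePi fun _ => π :=
      map_infinitePi_infinitePi_of_inj (f := fun j : ℕ => (0, j)) fun _ _ h => by simpa using h
    have htrunc : (truncRows 0 : (ℕ × ℕ → Bool) → ℕ × ℕ → Bool) = fun _ _ => default := by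
      funext z ij
      simp [truncRows]
    have hzero : thickenTrunc e 0 = (fun w => (w, fun _ => default)) ∘ e ∘ headRow := by
      funext x
      rw [thickenTrunc, htrunc]
      rfl
    rw [hzero, ← map_map (by fun_prop) (by fun_prop), ← map_map he measurable_headRow, hhead,
      hstep.map_eq he, htrunc, Measure.map_const, measure_univ, one_smul, prod_dirac]
  | succ m ih =>
    have hsplit : thickenTrunc e (m + 1) = thickenStep e ∘ Prod.map id (thickenTrunc e m) ∘
        fun x => (headRow x, tailRows x) :=
      funext (thickenTrunc_succ e m)
    rw [hsplit, ← map_map (by fun_prop) (by fun_prop), ← map_map (by fun_prop) (by fun_prop),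
      infinitePi_map_headRow_tailRows, ← prod_map_right _ _ (measurable_thickenTrunc he m), ih,
      map_thickenStep he hstep, infinitePi_prod_map_truncRows_map_rowCons]

theorem map_thicken (he : Measurable e) (hstep : IsMaxExtractor e π κ ρ) :
    (infinitePi fun _ : ℕ × ℕ => π).map (thicken e) = infinitePi fun _ => ρ := by
  refine eq_infinitePi_of_map_truncRows ρ _ fun m => ?_
  have h := congrArg (map Prod.snd) (map_thickenTrunc he hstep m)
  rw [map_map measurable_snd (measurable_thickenTrunc he m), map_snd_prod, measure_univ,
    one_smul] at h
  rw [map_map (measurable_truncRows m) (measurable_thicken he)]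
  exact h

end Thickening

/-- Given a perfect extractor `e` (producing `Bernoulli(q)^ℕ` output independent of
`max(X,Y)`), the map `F(x)(i,j) = max(x(i,j), e(x(i+1,·))(j))` is a discrete thickening
from density `p` to density `p' = p + q - pq` on `{0,1}^{ℕ×ℕ}`. -/
theorem thickening_from_extractor (p q : ℝ) (hp : 0 < p) (hp1 : p < 1) (hq : 0 < q) (hq1 : q < 1)
    (e : (ℕ → Bool) → (ℕ → Bool)) (he : Measurable e)
    (hlaw : ∀ μp : Measure (ℕ → Bool), IsBernoulliProduct p μp →
      IsBernoulliProduct q (μp.map e))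
    (hind : ∀ μp μq : Measure (ℕ → Bool), IsBernoulliProduct p μp → IsBernoulliProduct q μq →
      IndepFun (fun ω => e ω.1) (fun ω i => max (ω.1 i) (ω.2 i)) (μp.prod μq)) :
    (∀ (x : ℕ × ℕ → Bool) (ij : ℕ × ℕ),
      x ij ≤ max (x ij) (e (fun j => x (ij.1 + 1, j)) ij.2)) ∧
    ∀ μ : Measure (ℕ × ℕ → Bool), IsBernoulliProduct p μ →
      IsBernoulliProduct (p + q - p * q)
        (μ.map (fun x (ij : ℕ × ℕ) => max (x ij) (e (fun j => x (ij.1 + 1, j)) ij.2))) := by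
  have := isProbabilityMeasure_bernoulliMeasure hp.le hp1.le
  have := isProbabilityMeasure_bernoulliMeasure hq.le hq1.le
  have hBp := (isBernoulliProduct_iff_eq_infinitePi (I := ℕ) hp.le hp1.le).mpr rfl
  have hBq := (isBernoulliProduct_iff_eq_infinitePi (I := ℕ) hq.le hq1.le).mpr rfl
  have hstep := isMaxExtractor_of_indepFun he
    ((isBernoulliProduct_iff_eq_infinitePi hq.le hq1.le).mp (hlaw _ hBp)) (hind _ _ hBp hBq)
  rw [bernoulliMeasure_prod_map_max hp.le hp1.le hq.le hq1.le] at hstep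
  have hp'0 : 0 ≤ p + q - p * q := by nlinarith
  have hp'1 : p + q - p * q ≤ 1 := by nlinarith
  have := isProbabilityMeasure_bernoulliMeasure hp'0 hp'1
  refine ⟨fun x ij => le_max_left _ _, fun μ hμ => ?_⟩
  rw [isBernoulliProduct_iff_eq_infinitePi hp.le hp1.le] at hμ
  rw [isBernoulliProduct_iff_eq_infinitePi hp'0 hp'1, hμ]
  exact map_thicken he hstep
end

section
/- Let 0 < p < 1, 0 < q < 1, ε > 0, and let f : {0,1}^ℕ → {0,1} be an ε-extractor. Then there exists a corrector for f: a measurable function f' : {0,1}^ℕ × {0,1}^ℕ × {0,1}^ℕ → {0,1} such that, when X ~ Bernoulli(p)^ℕ, Y ~ Bernoulli(q)^ℕ and Z ~ Bernoulli(1/2)^ℕ are independent: (i) f(X) ⊕ f'(X,Y,Z) ~ Bernoulli(1/2); (ii) f(X) ⊕ f'(X,Y,Z) is independent of max(X,Y); (iii) P( f'(X,Y,Z) = 1 ) < ε. -/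
/-!
Let `g = E[f(X) | max(X,Y)]`. If the observed bit `f(X)` has conditional probability `a` given
`max(X,Y)` (so `a = g` or `a = 1 - g`), the corrector flips it with probability
`τ(a) = max(0, 1 - 1/(2a))`, tossing that coin with the fair bits `Z`. Conditionally on `max(X,Y)`
the corrected bit is then `1` with probability `g (1 - τ(g)) + (1 - g) τ(1 - g) = 1/2`, which gives
both its law and its independence from `max(X,Y)`, while the corrector fires with probability
`E[g τ(g) + (1 - g) τ(1 - g)] = E|g - 1/2| < ε`.
-/

open MeasureTheory ProbabilityTheory

lemma ENNReal.ofReal_half : ENNReal.ofReal (1/2) = 2⁻¹ := by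
  rw [one_div, ENNReal.ofReal_inv_of_pos two_pos, ENNReal.ofReal_ofNat]

section BernoulliCoin

noncomputable def binaryDigits (t : ℝ) (i : ℕ) : Bool := Real.digits t 2 i = 1

lemma hasSum_binaryDigits {t : ℝ} (ht : t ∈ Set.Ico 0 1) :
    HasSum (fun i => if binaryDigits t i then (2⁻¹ : ℝ) ^ (i + 1) else 0) t := by
  convert Real.hasSum_ofDigitsTerm_digits t one_lt_two ht using 2 with i
  rcases Fin.exists_fin_two.mp ⟨Real.digits t 2 i, rfl⟩ with h | h <;>
    simp [binaryDigits, Real.ofDigitsTerm, h]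

lemma measurable_binaryDigits : Measurable binaryDigits := by
  refine measurable_pi_lambda _ fun i => ?_
  exact (Measurable.of_discrete (f := fun k : ℕ => decide ((Fin.ofNat 2 k) = 1))).comp
    (measurable_id.mul_const _).nat_floor

open Classical in
/-- Reading the fair coins `z` as the binary expansion of a uniform number `U ∈ [0,1]`, this is
the indicator of `U < t`, up to the null set of sequences ending in constant digits. -/
noncomputable def bernoulliCoin (t : ℝ) (z : ℕ → Bool) : Bool :=
  decide (toLex z < toLex (binaryDigits t))

lemma Measurable.bernoulliCoin {α : Type*} [MeasurableSpace α] {θ : α → ℝ} {Z : α → ℕ → Bool}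
    (hθ : Measurable θ) (hZ : Measurable Z) : Measurable fun a => bernoulliCoin (θ a) (Z a) := by
  have hd : Measurable fun a => binaryDigits (θ a) := measurable_binaryDigits.comp hθ
  have hlt : Measurable fun a => toLex (Z a) < toLex (binaryDigits (θ a)) := by
    show Measurable fun a =>
      ∃ i, (∀ j < i, Z a j = binaryDigits (θ a) j) ∧ Z a i < binaryDigits (θ a) i
    fun_prop
  classical
  exact (Measurable.of_discrete (f := fun P : Prop => decide P)).comp hlt

variable {μ : Measure (ℕ → Bool)}

lemma IsBernoulliProduct.measure_cylinder_eq_inv_two_pow (h : IsBernoulliProduct (1/2) μ)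
    (n : ℕ) (d : ℕ → Bool) : μ {z | ∀ j ∈ Finset.range n, z j = d j} = 2⁻¹ ^ n := by
  have hfactor : ∀ i, (if d i then ENNReal.ofReal (1/2) else ENNReal.ofReal (1 - 1/2)) = 2⁻¹ :=
    fun i => by norm_num [ENNReal.ofReal_half]
  rw [h.2, Finset.prod_congr rfl fun i _ => hfactor i, Finset.prod_const, Finset.card_range]

lemma measure_toLex_lt (h : IsBernoulliProduct (1/2) μ) (d : ℕ → Bool) :
    μ {z | toLex z < toLex d} = ∑' i, if d i then 2⁻¹ ^ (i + 1) else 0 := by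
  set P : ℕ → Set (ℕ → Bool) := fun i => {z | (∀ j < i, z j = d j) ∧ z i < d i}
  have hU : {z : ℕ → Bool | toLex z < toLex d} = ⋃ i, P i := by
    ext z; simp only [Set.mem_iUnion]; rfl
  have hdisj : Pairwise (Function.onFun Disjoint P) := by
    refine pairwise_disjoint_on _ |>.mpr fun i j hij => Set.disjoint_left.mpr ?_
    rintro z ⟨-, hi⟩ ⟨hj, -⟩
    exact hi.ne (hj i hij)
  have hmeas : ∀ i, MeasurableSet (P i) := fun i => measurableSet_setOfPred.mpr (by fun_prop)
  rw [hU, measure_iUnion hdisj hmeas]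
  refine tsum_congr fun i => ?_
  by_cases hdi : d i
  · have hP : P i = {z | ∀ j ∈ Finset.range (i + 1), z j = Function.update d i false j} := by
      ext z
      simp only [P, Set.mem_ofPred_eq, Finset.mem_range, Nat.forall_lt_succ_right,
        Function.update_self]
      refine and_congr (forall₂_congr fun j hj => by rw [Function.update_of_ne hj.ne]) ?_
      rw [hdi]; cases z i <;> decide
    rw [hP, h.measure_cylinder_eq_inv_two_pow, if_pos hdi]
  · have hP : P i = ∅ :=
      Set.eq_empty_of_forall_notMem fun z hz => not_lt_bot (Bool.eq_false_iff.mpr hdi ▸ hz.2)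
    rw [hP, measure_empty, if_neg hdi]

lemma measure_bernoulliCoin_eq_true (h : IsBernoulliProduct (1/2) μ) {t : ℝ}
    (ht : t ∈ Set.Ico 0 1) : μ {z | bernoulliCoin t z = true} = ENNReal.ofReal t := by
  have hterm : ∀ i, ENNReal.ofReal (if binaryDigits t i then (2⁻¹ : ℝ) ^ (i + 1) else 0) =
      if binaryDigits t i then 2⁻¹ ^ (i + 1) else 0 := by
    intro i
    split_ifs
    · rw [ENNReal.ofReal_pow (by norm_num), ← one_div, ENNReal.ofReal_half]
    · exact ENNReal.ofReal_zero
  simp only [bernoulliCoin, decide_eq_true_eq]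
  rw [measure_toLex_lt h]
  conv_rhs => rw [← (hasSum_binaryDigits ht).tsum_eq,
    ENNReal.ofReal_tsum_of_nonneg (fun i => by positivity) (hasSum_binaryDigits ht).summable]
  exact (tsum_congr hterm).symm

lemma measure_xor_bernoulliCoin_eq_true (h : IsBernoulliProduct (1/2) μ) (b : Bool) {t : ℝ}
    (ht : t ∈ Set.Ico 0 1) :
    μ {z | xor b (bernoulliCoin t z) = true} = ENNReal.ofReal (if b then 1 - t else t) := by
  have := h.1
  cases b
  · simpa using measure_bernoulliCoin_eq_true h ht
  · have hmeas : MeasurableSet {z | bernoulliCoin t z = true} :=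
      (measurable_const.bernoulliCoin measurable_id) (measurableSet_singleton true)
    have hc : {z | xor true (bernoulliCoin t z) = true} = {z | bernoulliCoin t z = true}ᶜ := by
      ext; simp
    rw [hc, prob_compl_eq_one_sub hmeas, measure_bernoulliCoin_eq_true h ht, if_pos rfl,
      ENNReal.ofReal_sub _ ht.1, ENNReal.ofReal_one]

lemma measure_prod_xor_bernoulliCoin {α : Type*} [MeasurableSpace α] {ν : Measure α}
    [IsFiniteMeasure ν] (h : IsBernoulliProduct (1/2) μ) {b : α → Bool} {θ : α → ℝ}
    (hb : Measurable b) (hθ : Measurable θ) (hθI : ∀ a, θ a ∈ Set.Ico 0 1) {E : Set α}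
    (hE : MeasurableSet E) :
    (ν.prod μ) {p | xor (b p.1) (bernoulliCoin (θ p.1) p.2) = true ∧ p.1 ∈ E} =
      ENNReal.ofReal (∫ a in E, (if b a then 1 - θ a else θ a) ∂ν) := by
  have := h.1
  have hS : MeasurableSet
      {p : α × (ℕ → Bool) | xor (b p.1) (bernoulliCoin (θ p.1) p.2) = true ∧ p.1 ∈ E} := by
    have := (hθ.comp measurable_fst).bernoulliCoin measurable_snd
    refine measurableSet_setOfPred.mpr ?_
    fun_prop
  have hG : ∀ a, 0 ≤ (if b a then 1 - θ a else θ a) ∧ (if b a then 1 - θ a else θ a) ≤ 1 :=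
    fun a => by obtain ⟨h0, h1⟩ := hθI a; split_ifs <;> constructor <;> linarith
  have hGm : Measurable fun a => if b a then 1 - θ a else θ a :=
    Measurable.ite (hb (measurableSet_singleton true)) (measurable_const.sub hθ) hθ
  have hint : IntegrableOn (fun a => if b a then 1 - θ a else θ a) E ν :=
    (Integrable.of_bound hGm.aestronglyMeasurable 1
      (Filter.Eventually.of_forall fun a => by
        rw [Real.norm_eq_abs, abs_of_nonneg (hG a).1]; exact (hG a).2)).integrableOn
  rw [ofReal_integral_eq_lintegral_ofReal hint (Filter.Eventually.of_forall fun a => (hG a).1),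
    Measure.prod_apply hS, ← lintegral_indicator hE]
  refine lintegral_congr fun a => ?_
  by_cases ha : a ∈ E
  · rw [Set.indicator_of_mem ha, ← measure_xor_bernoulliCoin_eq_true h (b a) (hθI a)]
    congr 1
    ext z
    simp [ha]
  · simp [ha]

end BernoulliCoin

section FlipProb

/-- Flipping a bit value of conditional probability `a` at rate `flipProb a` makes the bit
conditionally fair at the least total flipping cost `|a - 1/2|`. -/
noncomputable def flipProb (a : ℝ) : ℝ := if 1/2 ≤ a then 1 - (2 * a)⁻¹ else 0

lemma flipProb_mem_Ico (a : ℝ) : flipProb a ∈ Set.Ico 0 1 := by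
  unfold flipProb
  split_ifs with h
  · have : 0 < (2 * a)⁻¹ := by positivity
    have : (2 * a)⁻¹ ≤ 1 := inv_le_one_of_one_le₀ (by linarith)
    constructor <;> linarith
  · simp

lemma abs_flipProb_le_one (a : ℝ) : |flipProb a| ≤ 1 :=
  abs_le.mpr ⟨by linarith [(flipProb_mem_Ico a).1], (flipProb_mem_Ico a).2.le⟩

lemma abs_one_sub_flipProb_le_one (a : ℝ) : |1 - flipProb a| ≤ 1 :=
  abs_le.mpr ⟨by linarith [(flipProb_mem_Ico a).2], by linarith [(flipProb_mem_Ico a).1]⟩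

lemma measurable_flipProb : Measurable flipProb :=
  Measurable.ite measurableSet_Ici (measurable_const.sub (measurable_const.mul measurable_id).inv)
    measurable_const

lemma mul_flipProb (a : ℝ) : a * flipProb a = max (a - 1/2) 0 := by
  unfold flipProb
  split_ifs with h
  · rw [max_eq_left (by linarith)]
    field_simp
  · rw [mul_zero, max_eq_right (by linarith)]

lemma mul_flipProb_add_mul_flipProb_one_sub (a : ℝ) :
    a * flipProb a + (1 - a) * flipProb (1 - a) = |a - 1/2| := by
  rw [mul_flipProb, mul_flipProb]
  rcases le_total a (1/2) with h | h
  · rw [abs_of_nonpos (by linarith), max_eq_right (by linarith), max_eq_left (by linarith)]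
    ring
  · rw [abs_of_nonneg (by linarith), max_eq_left (by linarith), max_eq_right (by linarith)]
    ring

lemma mul_one_sub_flipProb_add_mul_flipProb_one_sub (a : ℝ) :
    a * (1 - flipProb a) + (1 - a) * flipProb (1 - a) = 1/2 := by
  rw [mul_sub, mul_one, sub_add_eq_add_sub, mul_flipProb, mul_flipProb]
  rcases le_total a (1/2) with h | h
  · rw [max_eq_left (by linarith), max_eq_right (by linarith)]
    ring
  · rw [max_eq_right (by linarith), max_eq_left (by linarith)]
    ring

end FlipProb

section FlipThreshold

variable {α : Type*} {m mα : MeasurableSpace α} {ν : Measure α} {b : α → Bool}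

noncomputable def condProb (ν : Measure α) (m : MeasurableSpace α) (b : α → Bool) : α → ℝ :=
  ν[fun a => if b a then 1 else 0 | m]

lemma condExp_ite [IsFiniteMeasure ν] (hm : m ≤ mα) (hb : Measurable b) {φ ψ : α → ℝ} {C : ℝ}
    (hφ : StronglyMeasurable[m] φ) (hψ : StronglyMeasurable[m] ψ) (hφC : ∀ a, |φ a| ≤ C)
    (hψC : ∀ a, |ψ a| ≤ C) :
    ν[fun a => if b a then φ a else ψ a | m] =ᵐ[ν]
      fun a => condProb ν m b a * φ a + (1 - condProb ν m b a) * ψ a := by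
  set F : α → ℝ := fun a => if b a then 1 else 0
  have hFm : Measurable F :=
    Measurable.ite (hb (measurableSet_singleton true)) measurable_const measurable_const
  have hF : Integrable F ν := Integrable.of_bound hFm.aestronglyMeasurable 1
    (Filter.Eventually.of_forall fun a => by by_cases h : b a <;> simp [F, h])
  have hψ_int : Integrable ψ ν := Integrable.of_bound (hψ.mono hm).aestronglyMeasurable C
    (Filter.Eventually.of_forall hψC)
  have hsplit : (fun a => if b a then φ a else ψ a) = ψ + (φ - ψ) * F := by
    funext a; by_cases h : b a <;> simp [F, h]
  have hbound : ∀ᵐ a ∂ν, ‖(φ - ψ) a‖ ≤ 2 * C := Filter.Eventually.of_forall fun a => by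
    rw [Real.norm_eq_abs, Pi.sub_apply]; linarith [abs_sub (φ a) (ψ a), hφC a, hψC a]
  have hpull : ν[(φ - ψ) * F | m] =ᵐ[ν] (φ - ψ) * ν[F | m] :=
    condExp_stronglyMeasurable_mul_of_bound hm (hφ.sub hψ) hF (2 * C) hbound
  have hprod : Integrable ((φ - ψ) * F) ν :=
    hF.bdd_mul ((hφ.sub hψ).mono hm).aestronglyMeasurable hbound
  rw [hsplit]
  filter_upwards [condExp_add hψ_int hprod m, hpull] with a h1 h2
  rw [h1, Pi.add_apply, condExp_of_stronglyMeasurable hm hψ hψ_int, h2]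
  simp only [Pi.mul_apply, Pi.sub_apply, condProb]
  ring

noncomputable def flipThreshold (ν : Measure α) (m : MeasurableSpace α) (b : α → Bool) (a : α) :
    ℝ :=
  if b a then flipProb (condProb ν m b a) else flipProb (1 - condProb ν m b a)

lemma flipThreshold_mem_Ico (a : α) : flipThreshold ν m b a ∈ Set.Ico 0 1 := by
  unfold flipThreshold
  split_ifs <;> exact flipProb_mem_Ico _

lemma stronglyMeasurable_flipProb_comp {f : α → ℝ} (hf : StronglyMeasurable[m] f) :
    StronglyMeasurable[m] fun a => flipProb (f a) :=
  (measurable_flipProb.comp hf.measurable).stronglyMeasurable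

lemma measurable_flipThreshold (hm : m ≤ mα) (hb : Measurable b) :
    Measurable (flipThreshold ν m b) := by
  have hg : StronglyMeasurable[m] (condProb ν m b) := stronglyMeasurable_condExp
  exact Measurable.ite (hb (measurableSet_singleton true))
    ((stronglyMeasurable_flipProb_comp hg).mono hm).measurable
    ((stronglyMeasurable_flipProb_comp (stronglyMeasurable_const.sub hg)).mono hm).measurable

variable [IsFiniteMeasure ν]

lemma setIntegral_ite_eq_condProb (hm : m ≤ mα) (hb : Measurable b) {φ ψ : α → ℝ} {C : ℝ}
    (hφ : StronglyMeasurable[m] φ) (hψ : StronglyMeasurable[m] ψ) (hφC : ∀ a, |φ a| ≤ C)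
    (hψC : ∀ a, |ψ a| ≤ C) {E : Set α} (hE : MeasurableSet[m] E) :
    ∫ a in E, (if b a then φ a else ψ a) ∂ν =
      ∫ a in E, (condProb ν m b a * φ a + (1 - condProb ν m b a) * ψ a) ∂ν := by
  have hint : Integrable (fun a => if b a then φ a else ψ a) ν :=
    Integrable.of_bound (Measurable.ite (hb (measurableSet_singleton true))
      (hφ.mono hm).measurable (hψ.mono hm).measurable).aestronglyMeasurable C
      (Filter.Eventually.of_forall fun a => by split_ifs <;> simp [hφC a, hψC a])
  rw [← setIntegral_condExp hm hint hE]
  exact setIntegral_congr_ae (hm E hE)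
    ((condExp_ite hm hb hφ hψ hφC hψC).mono fun a h _ => h)

lemma setIntegral_flipThreshold_xor (hm : m ≤ mα) (hb : Measurable b) {E : Set α}
    (hE : MeasurableSet[m] E) :
    ∫ a in E, (if b a then 1 - flipThreshold ν m b a else flipThreshold ν m b a) ∂ν =
      ν.real E / 2 := by
  have hg : StronglyMeasurable[m] (condProb ν m b) := stronglyMeasurable_condExp
  have hite : (fun a => if b a then 1 - flipThreshold ν m b a else flipThreshold ν m b a) =
      fun a => if b a then 1 - flipProb (condProb ν m b a)
        else flipProb (1 - condProb ν m b a) := by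
    funext a; unfold flipThreshold; split_ifs <;> rfl
  rw [hite, setIntegral_ite_eq_condProb hm hb (C := 1)
    (φ := fun a => 1 - flipProb (condProb ν m b a)) (ψ := fun a => flipProb (1 - condProb ν m b a))
    (stronglyMeasurable_const.sub (stronglyMeasurable_flipProb_comp hg))
    (stronglyMeasurable_flipProb_comp (stronglyMeasurable_const.sub hg))
    (fun a => abs_one_sub_flipProb_le_one _) (fun a => abs_flipProb_le_one _) hE]
  simp_rw [mul_one_sub_flipProb_add_mul_flipProb_one_sub]
  rw [setIntegral_const, smul_eq_mul]
  ring

lemma integral_flipThreshold (hm : m ≤ mα) (hb : Measurable b) :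
    ∫ a, flipThreshold ν m b a ∂ν = ∫ a, |condProb ν m b a - 1/2| ∂ν := by
  have hg : StronglyMeasurable[m] (condProb ν m b) := stronglyMeasurable_condExp
  have h := setIntegral_ite_eq_condProb (ν := ν) hm hb (C := 1)
    (φ := fun a => flipProb (condProb ν m b a)) (ψ := fun a => flipProb (1 - condProb ν m b a))
    (stronglyMeasurable_flipProb_comp hg)
    (stronglyMeasurable_flipProb_comp (stronglyMeasurable_const.sub hg))
    (fun a => abs_flipProb_le_one _) (fun a => abs_flipProb_le_one _) MeasurableSet.univ
  rw [setIntegral_univ, setIntegral_univ] at h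
  simp_rw [mul_flipProb_add_mul_flipProb_one_sub] at h
  exact h

end FlipThreshold

section Corrector

variable {α : Type*} {m mα : MeasurableSpace α} {ν : Measure α} {b : α → Bool}
  {μ : Measure (ℕ → Bool)}

noncomputable def corrector (ν : Measure α) (m : MeasurableSpace α) (b : α → Bool)
    (p : α × (ℕ → Bool)) : Bool :=
  bernoulliCoin (flipThreshold ν m b p.1) p.2

lemma measurable_corrector (hm : m ≤ mα) (hb : Measurable b) :
    Measurable (corrector ν m b) :=
  ((measurable_flipThreshold hm hb).comp measurable_fst).bernoulliCoin measurable_snd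

variable [IsFiniteMeasure ν]

lemma measure_prod_xor_corrector (h : IsBernoulliProduct (1/2) μ) (hm : m ≤ mα)
    (hb : Measurable b) {E : Set α} (hE : MeasurableSet[m] E) :
    (ν.prod μ) {p | xor (b p.1) (corrector ν m b p) = true ∧ p.1 ∈ E} =
      2⁻¹ * (ν.prod μ) (Prod.fst ⁻¹' E) := by
  have := h.1
  refine (measure_prod_xor_bernoulliCoin h hb (measurable_flipThreshold hm hb)
    flipThreshold_mem_Ico (hm E hE)).trans ?_
  rw [setIntegral_flipThreshold_xor hm hb hE, ← Set.prod_univ,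
    Measure.prod_prod, measure_univ, mul_one, measureReal_def, div_eq_mul_inv,
    ENNReal.ofReal_mul ENNReal.toReal_nonneg, ENNReal.ofReal_toReal (measure_ne_top _ _),
    ENNReal.ofReal_inv_of_pos two_pos, ENNReal.ofReal_ofNat, mul_comm]

lemma measure_prod_corrector_eq_true (h : IsBernoulliProduct (1/2) μ) (hm : m ≤ mα)
    (hb : Measurable b) :
    (ν.prod μ) {p | corrector ν m b p = true} =
      ENNReal.ofReal (∫ a, |condProb ν m b a - 1/2| ∂ν) := by
  have := measure_prod_xor_bernoulliCoin (ν := ν) h (b := fun _ => false) measurable_const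
    (measurable_flipThreshold (ν := ν) hm hb) flipThreshold_mem_Ico MeasurableSet.univ
  simp only [Bool.false_xor, Set.mem_univ, and_true, Bool.false_eq_true, if_false,
    setIntegral_univ] at this
  exact this.trans (congrArg ENNReal.ofReal (integral_flipThreshold hm hb))

end Corrector

section BoolValued

variable {Ω β : Type*} [MeasurableSpace Ω] [MeasurableSpace β] {μ : Measure Ω} {B : Ω → Bool}

lemma map_eq_bernoulliMeasure_half [IsProbabilityMeasure μ] (hB : Measurable B)
    (h : μ (B ⁻¹' {true}) = 2⁻¹) : μ.map B = _root_.bernoulliMeasure (1/2) := by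
  have hfalse : B ⁻¹' {false} = (B ⁻¹' {true})ᶜ := by ext; simp
  refine Measure.ext_of_singleton fun c => ?_
  rw [Measure.map_apply hB (measurableSet_singleton c)]
  cases c
  · rw [hfalse, prob_compl_eq_one_sub (hB (measurableSet_singleton true)), h,
      ENNReal.one_sub_inv_two]
    norm_num [_root_.bernoulliMeasure, ENNReal.ofReal_half]
  · norm_num [_root_.bernoulliMeasure, h, ENNReal.ofReal_half]

lemma indepFun_of_measure_inter_preimage_true [IsProbabilityMeasure μ] {Y : Ω → β}
    (hB : Measurable B)
    (h : ∀ A, MeasurableSet A → μ (B ⁻¹' {true} ∩ Y ⁻¹' A) = μ (B ⁻¹' {true}) * μ (Y ⁻¹' A)) :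
    IndepFun B Y μ := by
  rw [indepFun_iff_measure_inter_preimage_eq_mul]
  intro s A _ hA
  set t := B ⁻¹' {true}
  have ht : MeasurableSet t := hB (measurableSet_singleton true)
  have hBt : B = t.boolIndicator := by
    funext ω; cases hω : B ω <;> simp [t, Set.boolIndicator, hω]
  rw [hBt]
  rcases Set.preimage_boolIndicator t s with hs | hs | hs | hs <;> rw [hs]
  · simp
  · exact h A hA
  · rw [prob_compl_eq_one_sub ht, ENNReal.sub_mul fun _ _ => measure_ne_top _ _, one_mul,
      Set.inter_comm, ← Set.sdiff_eq]
    refine ENNReal.eq_sub_of_add_eq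
      (ENNReal.mul_ne_top (measure_ne_top _ _) (measure_ne_top _ _)) ?_
    rw [← h A hA, add_comm, Set.inter_comm, measure_inter_add_sdiff _ ht]
  · simp

end BoolValued

lemma MeasureTheory.Measure.prod_prod_apply_prodAssoc {α β γ : Type*} [MeasurableSpace α]
    [MeasurableSpace β] [MeasurableSpace γ] (μ₁ : Measure α) (μ₂ : Measure β) (μ₃ : Measure γ)
    [SFinite μ₁] [SFinite μ₂] [SFinite μ₃] (s : Set (α × β × γ)) :
    μ₁.prod (μ₂.prod μ₃) s = (μ₁.prod μ₂).prod μ₃ (MeasurableEquiv.prodAssoc ⁻¹' s) := by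
  rw [← Measure.prodAssoc_prod, MeasurableEquiv.map_apply]

theorem corrector_exists_general (p q : ℝ) (ε : ℝ)
    (μp μq μz : Measure (ℕ → Bool))
    (hμp : IsBernoulliProduct p μp) (hμq : IsBernoulliProduct q μq)
    (hμz : IsBernoulliProduct (1/2) μz)
    (f : (ℕ → Bool) → Bool) (hf : Measurable f)
    -- `f` is an `ε`-extractor:
    (hf_ext : ∫ ω, |((μp.prod μq)[(fun ω : (ℕ → Bool) × (ℕ → Bool) =>
        if f ω.1 then (1:ℝ) else 0) |
        MeasurableSpace.comap
          (fun ω : (ℕ → Bool) × (ℕ → Bool) => fun i => max (ω.1 i) (ω.2 i))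
          inferInstance]) ω - 1/2| ∂(μp.prod μq) < ε) :
    ∃ f' : (ℕ → Bool) × (ℕ → Bool) × (ℕ → Bool) → Bool, Measurable f' ∧
      (μp.prod (μq.prod μz)).map (fun ω => xor (f ω.1) (f' ω)) = _root_.bernoulliMeasure (1/2) ∧
      IndepFun (fun ω => xor (f ω.1) (f' ω))
        (fun ω i => max (ω.1 i) (ω.2.1 i)) (μp.prod (μq.prod μz)) ∧
      (μp.prod (μq.prod μz)) {ω | f' ω = true} < ENNReal.ofReal ε := by
  have := hμp.1; have := hμq.1; have := hμz.1
  let M : (ℕ → Bool) × (ℕ → Bool) → ℕ → Bool := fun ω i => max (ω.1 i) (ω.2 i)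
  have hM : Measurable M := by fun_prop
  have hm := hM.comap_le
  have hb : Measurable fun ω : (ℕ → Bool) × (ℕ → Bool) => f ω.1 := hf.comp measurable_fst
  let f' := fun ω => corrector (μp.prod μq) (MeasurableSpace.comap M inferInstance) (fun ω => f ω.1)
    (MeasurableEquiv.prodAssoc.symm ω)
  have hf' : Measurable f' :=
    (measurable_corrector hm hb).comp MeasurableEquiv.prodAssoc.symm.measurable
  have hB : Measurable fun ω : (ℕ → Bool) × (ℕ → Bool) × (ℕ → Bool) => xor (f ω.1) (f' ω) := by
    fun_prop
  have hhalf : ∀ A, MeasurableSet A →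
      μp.prod (μq.prod μz) ((fun ω => xor (f ω.1) (f' ω)) ⁻¹' {true} ∩
        (fun ω i => max (ω.1 i) (ω.2.1 i)) ⁻¹' A) =
      2⁻¹ * μp.prod (μq.prod μz) ((fun ω i => max (ω.1 i) (ω.2.1 i)) ⁻¹' A) := by
    intro A hA
    rw [Measure.prod_prod_apply_prodAssoc, Measure.prod_prod_apply_prodAssoc]
    exact measure_prod_xor_corrector hμz hm hb ⟨A, hA, rfl⟩
  have htrue := hhalf Set.univ MeasurableSet.univ
  simp only [Set.preimage_univ, Set.inter_univ, measure_univ, mul_one] at htrue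
  refine ⟨f', hf', map_eq_bernoulliMeasure_half hB htrue,
    indepFun_of_measure_inter_preimage_true hB fun A hA => by rw [hhalf A hA, htrue], ?_⟩
  rw [Measure.prod_prod_apply_prodAssoc]
  refine (measure_prod_corrector_eq_true hμz hm hb).trans_lt ?_
  exact (ENNReal.ofReal_lt_ofReal_iff_of_nonneg (integral_nonneg fun _ => abs_nonneg _)).mpr hf_ext

/-- Every `ε`-extractor `f` admits a corrector `f'`: on the triple product space with
`X ~ Bernoulli(p)^ℕ`, `Y ~ Bernoulli(q)^ℕ`, `Z ~ Bernoulli(1/2)^ℕ` independent,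
`f(X) ⊕ f'(X,Y,Z) ~ Bernoulli(1/2)`, `f(X) ⊕ f'(X,Y,Z)` is independent of `max(X,Y)`,
and `P(f'(X,Y,Z) = 1) < ε`. -/
theorem corrector_exists (p q : ℝ) (hp : 0 < p) (hp1 : p < 1) (hq : 0 < q) (hq1 : q < 1)
    (ε : ℝ) (hε : 0 < ε)
    (μp μq μz : Measure (ℕ → Bool))
    (hμp : IsBernoulliProduct p μp) (hμq : IsBernoulliProduct q μq)
    (hμz : IsBernoulliProduct (1/2) μz)
    (f : (ℕ → Bool) → Bool) (hf : Measurable f)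
    -- `f` is an `ε`-extractor:
    (hf_law : (μp.prod μq).map (fun ω => f ω.1) = _root_.bernoulliMeasure (1/2))
    (hf_ext : ∫ ω, |((μp.prod μq)[(fun ω : (ℕ → Bool) × (ℕ → Bool) =>
        if f ω.1 then (1:ℝ) else 0) |
        MeasurableSpace.comap
          (fun ω : (ℕ → Bool) × (ℕ → Bool) => fun i => max (ω.1 i) (ω.2 i))
          inferInstance]) ω - 1/2| ∂(μp.prod μq) < ε) :
    ∃ f' : (ℕ → Bool) × (ℕ → Bool) × (ℕ → Bool) → Bool, Measurable f' ∧
      (μp.prod (μq.prod μz)).map (fun ω => xor (f ω.1) (f' ω)) = _root_.bernoulliMeasure (1/2) ∧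
      IndepFun (fun ω => xor (f ω.1) (f' ω))
        (fun ω i => max (ω.1 i) (ω.2.1 i)) (μp.prod (μq.prod μz)) ∧
      (μp.prod (μq.prod μz)) {ω | f' ω = true} < ENNReal.ofReal ε :=
  corrector_exists_general p q ε μp μq μz hμp hμq hμz f hf hf_ext
end
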